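/- arXiv:2101.03211 — 3 statements merged into one kernel-verified Lean document; each statement's English description precedes it below -/
import Mathlib

section
/- Fix k ≥ 1. Given a finite index set J and, for each j ∈ J, nonempty finite subsets A_j, B_j of Fin k, let E := {x : Fin k → ℝ | (∀ i, 0 ≤ x i ∧ x i ≤ 1) ∧ ∀ j ∈ J, max_{i ∈ A_j} x i = max_{i ∈ B_j} x i}. For any permutation σ of Fin k and any ε : Fin (k+1) → Bool, let S(σ, ε) be the chain cell consisting of all x : Fin k → ℝ satisfying the chain of conditions 0 R₀ x(σ 0) R₁ x(σ 1) ⋯ R_{k−1} x(σ (k−1)) R_k 1, where R_i is strict inequality '<' if ε i = true and equality '=' otherwise. Then either S(σ, ε) ⊆ E or S(σ, ε) is disjoint from E. (Lemma 2.12, first assertion.) -/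
/-- The sequence `0, x (σ 0), x (σ 1), …, x (σ (k-1)), 1` of length `k + 2`. -/
noncomputable def chainSeq (k : ℕ) (σ : Equiv.Perm (Fin k)) (x : Fin k → ℝ) :
    Fin (k + 2) → ℝ :=
  fun i =>
    if h0 : (i : ℕ) = 0 then 0
    else if hk : (i : ℕ) = k + 1 then 1
    else x (σ ⟨(i : ℕ) - 1, by omega⟩)

/-- The chain cell `S(σ, ε)`: the set of `x : Fin k → ℝ` satisfying
`0 R₀ x (σ 0) R₁ x (σ 1) ⋯ R_{k-1} x (σ (k-1)) R_k 1`, where `R_i` is `<` if `ε i = true`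
and `=` otherwise. -/
noncomputable def chainCell (k : ℕ) (σ : Equiv.Perm (Fin k)) (ε : Fin (k + 1) → Bool) :
    Set (Fin k → ℝ) :=
  {x | ∀ i : Fin (k + 1),
    if ε i then chainSeq k σ x i.castSucc < chainSeq k σ x i.succ
    else chainSeq k σ x i.castSucc = chainSeq k σ x i.succ}

lemma chainSeq_coord (k : ℕ) (σ : Equiv.Perm (Fin k)) (x : Fin k → ℝ) (i : Fin k) :
    chainSeq k σ x ⟨(σ.symm i : ℕ) + 1, by have := (σ.symm i).isLt; omega⟩ = x i := by
  have h := (σ.symm i).isLt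
  simp only [chainSeq]
  rw [dif_neg (by omega), dif_neg (by omega)]
  have : (⟨(σ.symm i : ℕ) + 1 - 1, by omega⟩ : Fin k) = σ.symm i := by
    ext; simp
  rw [this, σ.apply_symm_apply]

lemma chainCell_step {k : ℕ} {σ : Equiv.Perm (Fin k)} {ε : Fin (k+1) → Bool}
    {x : Fin k → ℝ} (hx : x ∈ chainCell k σ ε) (i : Fin (k+1)) :
    chainSeq k σ x i.castSucc ≤ chainSeq k σ x i.succ := by
  have h := hx i
  by_cases hi : ε i <;> simp [hi] at h <;> [exact h.le; exact h.le]

lemma chainCell_mono {k : ℕ} {σ : Equiv.Perm (Fin k)} {ε : Fin (k+1) → Bool}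
    {x : Fin k → ℝ} (hx : x ∈ chainCell k σ ε) : Monotone (chainSeq k σ x) :=
  Fin.monotone_iff_le_succ.mpr (chainCell_step hx)

/-- If all ε between a and b are false, chainSeq is constant there. -/
lemma chainCell_eq_of_false {k : ℕ} {σ : Equiv.Perm (Fin k)} {ε : Fin (k+1) → Bool}
    {x : Fin k → ℝ} (hx : x ∈ chainCell k σ ε) :
    ∀ n : ℕ, ∀ a b : Fin (k+2), (b : ℕ) = (a : ℕ) + n →
      (∀ i : Fin (k+1), (a : ℕ) ≤ (i : ℕ) → (i : ℕ) < (b : ℕ) → ε i = false) →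
      chainSeq k σ x a = chainSeq k σ x b := by
  intro n
  induction n with
  | zero => intro a b hab _; congr 1; ext; omega
  | succ n ih =>
    intro a b hab hfalse
    have ha : (a : ℕ) < k + 1 := by have := b.isLt; omega
    set i : Fin (k+1) := ⟨a, ha⟩ with hi
    have h1 : chainSeq k σ x i.castSucc = chainSeq k σ x i.succ := by
      have := hx i
      rw [hfalse i (by simp [hi]) (by simp [hi]; omega)] at this
      simpa using this
    have hcast : i.castSucc = a := by ext; simp [hi]
    rw [← hcast, h1]
    exact ih i.succ b (by simp [hi]; omega)
      (fun j hj1 hj2 => hfalse j (by simp [hi] at hj1; omega) hj2)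

/-- Transfer of equalities between two members of a chain cell. -/
lemma chainCell_transfer {k : ℕ} {σ : Equiv.Perm (Fin k)} {ε : Fin (k+1) → Bool}
    {x y : Fin k → ℝ} (hx : x ∈ chainCell k σ ε) (hy : y ∈ chainCell k σ ε)
    {a b : Fin (k+2)} (hab : a ≤ b) (h : chainSeq k σ x a = chainSeq k σ x b) :
    chainSeq k σ y a = chainSeq k σ y b := by
  have hfalse : ∀ i : Fin (k+1), (a : ℕ) ≤ (i : ℕ) → (i : ℕ) < (b : ℕ) → ε i = false := by
    intro i h1 h2
    by_contra hne
    have hti : ε i = true := by simpa using hne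
    have hlt : chainSeq k σ x i.castSucc < chainSeq k σ x i.succ := by
      have := hx i; rwa [hti, if_pos rfl] at this
    have le1 : chainSeq k σ x a ≤ chainSeq k σ x i.castSucc :=
      chainCell_mono hx (by simp [Fin.le_def]; omega)
    have le2 : chainSeq k σ x i.succ ≤ chainSeq k σ x b :=
      chainCell_mono hx (by simp [Fin.le_def]; omega)
    linarith [h ▸ (lt_of_le_of_lt le1 (lt_of_lt_of_le hlt le2))]
  exact chainCell_eq_of_false hy ((b : ℕ) - a) a b (by have := Fin.le_def.mp hab; omega) hfalse

/-- sup' over a finset equals the chainSeq value at the max position. -/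
lemma chainCell_sup' {k : ℕ} {σ : Equiv.Perm (Fin k)} {ε : Fin (k+1) → Bool}
    {z : Fin k → ℝ} (hz : z ∈ chainCell k σ ε) (A : Finset (Fin k)) (hA : A.Nonempty) :
    A.sup' hA z = chainSeq k σ z
      ⟨A.sup' hA (fun i => (σ.symm i : ℕ)) + 1, by
        have := Finset.sup'_lt_iff hA (a := k) |>.mpr (fun i _ => (σ.symm i).isLt)
        omega⟩ := by
  obtain ⟨i₀, hi₀A, hi₀⟩ := Finset.exists_mem_eq_sup' hA (fun i => (σ.symm i : ℕ))
  have hcoord : ∀ i : Fin k, z i = chainSeq k σ z ⟨(σ.symm i : ℕ) + 1,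
      by have := (σ.symm i).isLt; omega⟩ := fun i => (chainSeq_coord k σ z i).symm
  have key : chainSeq k σ z ⟨A.sup' hA (fun i => (σ.symm i : ℕ)) + 1, by
      have := Finset.sup'_lt_iff hA (a := k) |>.mpr (fun i _ => (σ.symm i).isLt); omega⟩
      = z i₀ := by
    rw [hcoord i₀]; congr 1; ext; simp [hi₀]
  rw [key]
  apply le_antisymm
  · apply Finset.sup'_le
    intro i hiA
    rw [hcoord i, hcoord i₀]
    apply chainCell_mono hz
    rw [Fin.mk_le_mk]
    have := Finset.le_sup' (fun i => ((σ.symm i : ℕ))) hiA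
    omega
  · exact Finset.le_sup' z hi₀A

/-- each chain cell is either contained in `E` or disjoint from it. -/
theorem stmt1 (k : ℕ) (hk : 1 ≤ k) (J : Type*) [Fintype J]
    (A B : J → Finset (Fin k)) (hA : ∀ j, (A j).Nonempty) (hB : ∀ j, (B j).Nonempty)
    (E : Set (Fin k → ℝ))
    (hE : E = {x | (∀ i, 0 ≤ x i ∧ x i ≤ 1) ∧
      ∀ j : J, (A j).sup' (hA j) x = (B j).sup' (hB j) x})
    (σ : Equiv.Perm (Fin k)) (ε : Fin (k + 1) → Bool) :
    chainCell k σ ε ⊆ E ∨ Disjoint (chainCell k σ ε) E := by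
  by_cases hne : (chainCell k σ ε ∩ E).Nonempty
  · left
    obtain ⟨x, hxC, hxE⟩ := hne
    intro y hyC
    rw [hE] at hxE ⊢
    obtain ⟨-, hxsup⟩ := hxE
    constructor
    · intro i
      have h0 : chainSeq k σ y 0 = 0 := by simp [chainSeq]
      have h1 : chainSeq k σ y ⟨k+1, by omega⟩ = 1 := by simp [chainSeq]
      have hc := chainSeq_coord k σ y i
      constructor
      · rw [← hc, ← h0]
        exact chainCell_mono hyC (by simp [Fin.le_def])
      · rw [← hc, ← h1]
        apply chainCell_mono hyC
        rw [Fin.mk_le_mk]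
        have := (σ.symm i).isLt
        omega
    · intro j
      rw [chainCell_sup' hyC (A j) (hA j), chainCell_sup' hyC (B j) (hB j)]
      have hx' : chainSeq k σ x
          ⟨(A j).sup' (hA j) (fun i => (σ.symm i : ℕ)) + 1, by
            have := Finset.sup'_lt_iff (hA j) (a := k) |>.mpr (fun i _ => (σ.symm i).isLt)
            omega⟩
          = chainSeq k σ x
          ⟨(B j).sup' (hB j) (fun i => (σ.symm i : ℕ)) + 1, by
            have := Finset.sup'_lt_iff (hB j) (a := k) |>.mpr (fun i _ => (σ.symm i).isLt)
            omega⟩ := by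
        rw [← chainCell_sup' hxC (A j) (hA j), ← chainCell_sup' hxC (B j) (hB j)]
        exact hxsup j
      rcases le_total
          (⟨(A j).sup' (hA j) (fun i => (σ.symm i : ℕ)) + 1, by
            have := Finset.sup'_lt_iff (hA j) (a := k) |>.mpr (fun i _ => (σ.symm i).isLt)
            omega⟩ : Fin (k+2))
          (⟨(B j).sup' (hB j) (fun i => (σ.symm i : ℕ)) + 1, by
            have := Finset.sup'_lt_iff (hB j) (a := k) |>.mpr (fun i _ => (σ.symm i).isLt)
            omega⟩ : Fin (k+2)) with hle | hle
      · exact chainCell_transfer hxC hyC hle hx'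
      · exact (chainCell_transfer hxC hyC hle hx'.symm).symm
  · right
    rw [Set.disjoint_iff_inter_eq_empty]
    exact Set.not_nonempty_iff_eq_empty.mp hne
end

section
/- Fix k ≥ 1. Given a finite index set J and, for each j ∈ J, nonempty finite subsets A_j, B_j of Fin k, let E := {x : Fin k → ℝ | (∀ i, 0 ≤ x i ∧ x i ≤ 1) ∧ ∀ j ∈ J, max_{i ∈ A_j} x i = max_{i ∈ B_j} x i}. Then E equals the union of all chain cells S(σ, ε) (over all permutations σ of Fin k and all ε : Fin (k+1) → Bool) that are contained in E. (Lemma 2.12, second assertion: the simplices of the standard decomposition of the cube that lie in C_{2T} cover C_{2T}.) -/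
lemma chainSeq_zero (k : ℕ) (σ : Equiv.Perm (Fin k)) (x : Fin k → ℝ) (i : Fin (k + 2))
    (h0 : (i : ℕ) = 0) : chainSeq k σ x i = 0 := by
  simp [chainSeq, h0]

lemma chainSeq_last (k : ℕ) (σ : Equiv.Perm (Fin k)) (x : Fin k → ℝ) (i : Fin (k + 2))
    (hl : (i : ℕ) = k + 1) : chainSeq k σ x i = 1 := by
  have : (i : ℕ) ≠ 0 := by omega
  simp [chainSeq, this, hl]

lemma chainSeq_succ (k : ℕ) (σ : Equiv.Perm (Fin k)) (x : Fin k → ℝ) (a : Fin k)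
    (i : Fin (k + 2)) (h : (i : ℕ) = (a : ℕ) + 1) : chainSeq k σ x i = x (σ a) := by
  have h0 : (i : ℕ) ≠ 0 := by omega
  have hl : (i : ℕ) ≠ k + 1 := by have := a.isLt; omega
  have : chainSeq k σ x i = x (σ ⟨(i : ℕ) - 1, by omega⟩) := by
    simp [chainSeq, h0, hl]
  rw [this]
  have : (⟨(i : ℕ) - 1, by omega⟩ : Fin k) = a := Fin.ext (by simp [h])
  rw [this]

lemma sup'_of_monotone {k : ℕ} (g : Fin k → ℝ) (hg : Monotone g) (S : Finset (Fin k))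
    (hS : S.Nonempty) : S.sup' hS g = g (S.max' hS) :=
  le_antisymm (Finset.sup'_le _ _ fun i hi => hg (S.le_max' i hi))
    (Finset.le_sup' g (S.max'_mem hS))

/-- `E` is the union of the chain cells contained in it. -/
theorem stmt2 (k : ℕ) (hk : 1 ≤ k) (J : Type*) [Fintype J]
    (A B : J → Finset (Fin k)) (hA : ∀ j, (A j).Nonempty) (hB : ∀ j, (B j).Nonempty)
    (E : Set (Fin k → ℝ))
    (hE : E = {x | (∀ i, 0 ≤ x i ∧ x i ≤ 1) ∧
      ∀ j : J, (A j).sup' (hA j) x = (B j).sup' (hB j) x}) :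
    E = ⋃ (σ : Equiv.Perm (Fin k)) (ε : Fin (k + 1) → Bool)
      (_ : chainCell k σ ε ⊆ E), chainCell k σ ε := by
  ext x
  simp only [Set.mem_iUnion]
  constructor
  · intro hx
    have hx' : (∀ i, 0 ≤ x i ∧ x i ≤ 1) ∧
        ∀ j : J, (A j).sup' (hA j) x = (B j).sup' (hB j) x := by rwa [hE] at hx
    set σ := Tuple.sort x with hσ
    have hmono : Monotone (x ∘ σ) := Tuple.monotone_sort x
    set s := chainSeq k σ x with hsdef
    -- s is monotone
    have hs_mono : Monotone s := by
      refine Fin.monotone_iff_le_succ.2 fun i => ?_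
      rcases Nat.eq_zero_or_pos (i : ℕ) with h0 | h0
      · have e0 : s i.castSucc = 0 :=
          chainSeq_zero k σ x _ (by simp [Fin.coe_castSucc, h0])
        rcases eq_or_lt_of_le (Nat.succ_le_of_lt i.isLt) with hl | hl
        · have e1 : s i.succ = 1 :=
            chainSeq_last k σ x _ (by simp only [Fin.val_succ]; omega)
          rw [e0, e1]; norm_num
        · have e1 : s i.succ = x (σ ⟨(i : ℕ), by omega⟩) :=
            chainSeq_succ k σ x ⟨(i : ℕ), by omega⟩ _ (by simp only [Fin.val_succ])
          rw [e0, e1]; exact (hx'.1 _).1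
      · rcases eq_or_lt_of_le (Nat.succ_le_of_lt i.isLt) with hl | hl
        · have e1 : s i.succ = 1 :=
            chainSeq_last k σ x _ (by simp only [Fin.val_succ]; omega)
          have e0 : s i.castSucc = x (σ ⟨(i : ℕ) - 1, by omega⟩) :=
            chainSeq_succ k σ x ⟨(i : ℕ) - 1, by omega⟩ _
              (by simp only [Fin.coe_castSucc]; omega)
          rw [e1, e0]; exact (hx'.1 _).2
        · have e0 : s i.castSucc = x (σ ⟨(i : ℕ) - 1, by omega⟩) :=
            chainSeq_succ k σ x ⟨(i : ℕ) - 1, by omega⟩ _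
              (by simp only [Fin.coe_castSucc]; omega)
          have e1 : s i.succ = x (σ ⟨(i : ℕ), by omega⟩) :=
            chainSeq_succ k σ x ⟨(i : ℕ), by omega⟩ _ (by simp only [Fin.val_succ])
          rw [e0, e1]
          exact hmono (Fin.mk_le_mk.2 (by omega))
    classical
    set ε : Fin (k + 1) → Bool := fun i => decide (s i.castSucc < s i.succ) with hε
    have hxcell : x ∈ chainCell k σ ε := by
      intro i
      have hb : ε i = true ↔ s i.castSucc < s i.succ := by simp [hε]
      by_cases h : s i.castSucc < s i.succ
      · rw [if_pos (hb.2 h)]; exact h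
      · rw [if_neg (fun hh => h (hb.1 hh))]
        exact le_antisymm (hs_mono (Fin.castSucc_le_succ i)) (not_lt.1 h)
    refine ⟨σ, ε, ?_, hxcell⟩
    intro y hy
    set t := chainSeq k σ y with htdef
    have hstep : ∀ i : Fin (k + 1), t i.castSucc ≤ t i.succ := by
      intro i
      have := hy i
      by_cases h : ε i
      · rw [if_pos h] at this; exact this.le
      · rw [if_neg h] at this; exact this.le
    have ht_mono : Monotone t := Fin.monotone_iff_le_succ.2 hstep
    have stepEq : ∀ m : Fin (k + 1), s m.castSucc = s m.succ → t m.castSucc = t m.succ := by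
      intro m hm
      have hym := hy m
      by_cases h : ε m
      · have hxm := hxcell m
        rw [if_pos h] at hxm
        exact absurd hm (ne_of_lt hxm)
      · rw [if_neg h] at hym; exact hym
    have key : ∀ n : ℕ, ∀ i j : Fin (k + 2), (j : ℕ) = (i : ℕ) + n → s i = s j → t i = t j := by
      intro n
      induction n with
      | zero =>
        intro i j h _
        have : i = j := Fin.ext (by omega)
        rw [this]
      | succ n ih =>
        intro i j h hs0
        have hlt : (i : ℕ) + n < k + 1 := by omega
        set m : Fin (k + 1) := ⟨(i : ℕ) + n, hlt⟩ with hm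
        have hcs : ((m.castSucc : Fin (k + 2)) : ℕ) = (i : ℕ) + n := rfl
        have hsc : m.succ = j := Fin.ext (by rw [Fin.val_succ]; show (i : ℕ) + n + 1 = _; omega)
        have h1 : s i ≤ s m.castSucc := hs_mono (Fin.le_def.2 (by rw [hcs]; omega))
        have h2 : s m.castSucc ≤ s j := hs_mono (Fin.le_def.2 (by rw [hcs]; omega))
        have e1 : s i = s m.castSucc := le_antisymm h1 (hs0 ▸ h2)
        have e2 : s m.castSucc = s m.succ := by rw [hsc, ← e1]; exact hs0
        calc t i = t m.castSucc := ih i m.castSucc (by rw [hcs]) e1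
          _ = t m.succ := stepEq m e2
          _ = t j := by rw [hsc]
    have hyt : ∀ a : Fin k, y (σ a) = t ⟨(a : ℕ) + 1, by omega⟩ := fun a =>
      (chainSeq_succ k σ y a ⟨(a : ℕ) + 1, by omega⟩ rfl).symm
    have hxs : ∀ a : Fin k, x (σ a) = s ⟨(a : ℕ) + 1, by omega⟩ := fun a =>
      (chainSeq_succ k σ x a ⟨(a : ℕ) + 1, by omega⟩ rfl).symm
    rw [hE]
    constructor
    · intro i
      have hrw := hyt (σ.symm i)
      rw [Equiv.apply_symm_apply] at hrw
      rw [hrw]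
      constructor
      · have h0 : t ⟨0, by omega⟩ = 0 := chainSeq_zero k σ y _ rfl
        rw [← h0]; exact ht_mono (Fin.mk_le_mk.2 (by omega))
      · have h1 : t ⟨k + 1, by omega⟩ = 1 := chainSeq_last k σ y _ rfl
        rw [← h1]
        exact ht_mono (Fin.mk_le_mk.2 (by have := (σ.symm i).isLt; omega))
    · intro j
      have hyσmono : Monotone (y ∘ σ) := by
        intro a b hab
        have h1 := ht_mono (show (⟨(a : ℕ) + 1, by omega⟩ : Fin (k + 2)) ≤ ⟨(b : ℕ) + 1, by omega⟩
          from Fin.mk_le_mk.2 (by have := Fin.le_def.1 hab; omega))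
        simpa [Function.comp, hyt a, hyt b] using h1
      have gen : ∀ (S : Finset (Fin k)) (hS : S.Nonempty) (z : Fin k → ℝ)
          (hz : Monotone (z ∘ σ)),
          S.sup' hS z = (z ∘ σ) ((S.image σ.symm).max' (hS.image _)) := by
        intro S hS z hz
        have h1 : S.sup' hS z = (S.image σ.symm).sup' (hS.image _) (z ∘ σ) := by
          rw [Finset.sup'_image]
          exact (Finset.sup'_congr hS rfl (fun a _ => by simp)).symm
        rw [h1, sup'_of_monotone _ hz]
      set a := ((A j).image σ.symm).max' ((hA j).image _) with ha
      set b := ((B j).image σ.symm).max' ((hB j).image _) with hb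
      have hxab : x (σ a) = x (σ b) := by
        have h1 := hx'.2 j
        rwa [gen _ (hA j) x hmono, gen _ (hB j) x hmono] at h1
      have hsab : s ⟨(a : ℕ) + 1, by omega⟩ = s ⟨(b : ℕ) + 1, by omega⟩ := by
        rw [← hxs a, ← hxs b]; exact hxab
      have htab : t ⟨(a : ℕ) + 1, by omega⟩ = t ⟨(b : ℕ) + 1, by omega⟩ := by
        rcases le_total (a : ℕ) (b : ℕ) with hab | hab
        · exact key ((b : ℕ) - (a : ℕ)) _ _ (by show (b : ℕ) + 1 = (a : ℕ) + 1 + ((b : ℕ) - (a : ℕ)); omega) hsab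
        · exact (key ((a : ℕ) - (b : ℕ)) _ _ (by show (a : ℕ) + 1 = (b : ℕ) + 1 + ((a : ℕ) - (b : ℕ)); omega) hsab.symm).symm
      rw [gen _ (hA j) y hyσmono, gen _ (hB j) y hyσmono]
      simp only [Function.comp]
      rw [hyt a, hyt b, htab]
  · rintro ⟨σ, ε, hsub, hmem⟩
    exact hsub hmem
end

section
/- The set P := {x ∈ [0,1]^4 | max(x 0, x 1) = max(x 2, x 3)} (a subset of Fin 4 → ℝ) is homeomorphic to the closed unit ball in three-dimensional Euclidean space. (This is the paper's example of the closed cell in W_{40}^W cut out by the coherence condition max(a,b) = max(c,d) on the four edge-lengths, which has the topological type of a square pyramid.) -/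
/-!
The fold `(a, b) ↦ (max a b, a - b)` is a homeomorphism of `ℝ²` with inverse
`(t, s) ↦ (t + min s 0, t - max s 0)`, and it carries the square `[0,1]²` onto the triangle
`|s| ≤ t ≤ 1`. Folding both pairs `(x 0, x 1)` and `(x 2, x 3)` turns the coherence condition into
the equality of the two `t`-coordinates, so the cell is homeomorphic to the square pyramid
`|s| ≤ t, |r| ≤ t, t ≤ 1` in `ℝ³`. The pyramid is a compact convex body, and rescaling along its
gauge function maps it homeomorphically onto the closed unit ball.
-/

open Metric Set

lemma max_add_min_sub_zero (a b : ℝ) : max a b + min (a - b) 0 = a := by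
  rcases le_total a b with h | h <;> simp [h]

lemma max_sub_max_sub_zero (a b : ℝ) : max a b - max (a - b) 0 = b := by
  rcases le_total a b with h | h <;> simp [h]

lemma max_add_min_zero_sub_max_zero (t s : ℝ) : max (t + min s 0) (t - max s 0) = t := by
  rcases le_total s 0 with h | h <;> simp [h]

lemma abs_sub_le_max_and_max_le_one_iff (a b : ℝ) :
    |a - b| ≤ max a b ∧ max a b ≤ 1 ↔ (0 ≤ a ∧ a ≤ 1) ∧ (0 ≤ b ∧ b ≤ 1) := by
  rw [← max_sub_min_eq_abs', sub_le_self_iff, le_min_iff, max_le_iff]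
  tauto

lemma convex_setOf_abs_le {E : Type*} [AddCommGroup E] [Module ℝ E] (f g : E →ₗ[ℝ] ℝ) :
    Convex ℝ {x | |f x| ≤ g x} := by
  have h : {x | |f x| ≤ g x} = {x | (f - g) x ≤ 0} ∩ {x | (-f - g) x ≤ 0} := by
    ext x
    simp [abs_le']
  rw [h]
  exact (convex_halfSpace_le (f - g).isLinear 0).inter (convex_halfSpace_le (-f - g).isLinear 0)

theorem Convex.nonempty_homeomorph_closedBall {E : Type*} [NormedAddCommGroup E]
    [NormedSpace ℝ E] {s : Set E} (hc : Convex ℝ s) (hne : (interior s).Nonempty)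
    (hs : IsCompact s) : Nonempty (s ≃ₜ closedBall (0 : E) 1) := by
  obtain ⟨h, -, hcl, -⟩ :=
    exists_homeomorph_image_interior_closure_frontier_eq_unitBall hc hne hs.isBounded
  rw [hs.isClosed.closure_eq] at hcl
  exact ⟨(h.image s).trans (Homeomorph.setCongr hcl)⟩

namespace CoherentCell

def cell : Set (Fin 4 → ℝ) :=
  {x | (∀ i, 0 ≤ x i ∧ x i ≤ 1) ∧ max (x 0) (x 1) = max (x 2) (x 3)}

def pyramid : Set (EuclideanSpace ℝ (Fin 3)) :=
  {p | |p 1| ≤ p 0 ∧ |p 2| ≤ p 0 ∧ p 0 ≤ 1}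

def fold (x : Fin 4 → ℝ) : EuclideanSpace ℝ (Fin 3) :=
  !₂[max (x 0) (x 1), x 0 - x 1, x 2 - x 3]

def unfold (p : EuclideanSpace ℝ (Fin 3)) : Fin 4 → ℝ :=
  ![p 0 + min (p 1) 0, p 0 - max (p 1) 0, p 0 + min (p 2) 0, p 0 - max (p 2) 0]

lemma fold_unfold (p : EuclideanSpace ℝ (Fin 3)) : fold (unfold p) = p := by
  ext i
  fin_cases i <;> simp [fold, unfold, max_add_min_zero_sub_max_zero]

lemma unfold_fold {x : Fin 4 → ℝ} (hx : x ∈ cell) : unfold (fold x) = x := by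
  obtain ⟨-, hmax⟩ := hx
  ext i
  fin_cases i
  · exact max_add_min_sub_zero (x 0) (x 1)
  · exact max_sub_max_sub_zero (x 0) (x 1)
  · show max (x 0) (x 1) + min (x 2 - x 3) 0 = x 2
    rw [hmax, max_add_min_sub_zero]
  · show max (x 0) (x 1) - max (x 2 - x 3) 0 = x 3
    rw [hmax, max_sub_max_sub_zero]

lemma fold_mem_pyramid {x : Fin 4 → ℝ} (hx : x ∈ cell) : fold x ∈ pyramid := by
  obtain ⟨hunit, hmax⟩ := hx
  obtain ⟨h01, h0⟩ := (abs_sub_le_max_and_max_le_one_iff (x 0) (x 1)).2 ⟨hunit 0, hunit 1⟩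
  obtain ⟨h23, -⟩ := (abs_sub_le_max_and_max_le_one_iff (x 2) (x 3)).2 ⟨hunit 2, hunit 3⟩
  rw [← hmax] at h23
  exact ⟨h01, h23, h0⟩

lemma unfold_mem_cell {p : EuclideanSpace ℝ (Fin 3)} (hp : p ∈ pyramid) : unfold p ∈ cell := by
  obtain ⟨h1, h2, h0⟩ := hp
  have unit_pair (s : ℝ) (hs : |s| ≤ p 0) :
      (0 ≤ p 0 + min s 0 ∧ p 0 + min s 0 ≤ 1) ∧ (0 ≤ p 0 - max s 0 ∧ p 0 - max s 0 ≤ 1) := by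
    rw [← abs_sub_le_max_and_max_le_one_iff, max_add_min_zero_sub_max_zero]
    exact ⟨by simpa using hs, h0⟩
  refine ⟨fun i => ?_, ?_⟩
  · fin_cases i
    exacts [(unit_pair _ h1).1, (unit_pair _ h1).2, (unit_pair _ h2).1, (unit_pair _ h2).2]
  · show max (p 0 + min (p 1) 0) (p 0 - max (p 1) 0) = max (p 0 + min (p 2) 0) (p 0 - max (p 2) 0)
    rw [max_add_min_zero_sub_max_zero, max_add_min_zero_sub_max_zero]

@[fun_prop] lemma continuous_fold : Continuous fold := by
  refine (EuclideanSpace.equiv (Fin 3) ℝ).symm.continuous.comp (continuous_pi fun i => ?_)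
  fin_cases i <;> dsimp <;> fun_prop

@[fun_prop] lemma continuous_unfold : Continuous unfold := by
  refine continuous_pi fun i => ?_
  fin_cases i <;> dsimp [unfold] <;> fun_prop

def cellHomeomorphPyramid : cell ≃ₜ pyramid where
  toFun x := ⟨fold x, fold_mem_pyramid x.2⟩
  invFun p := ⟨unfold p, unfold_mem_cell p.2⟩
  left_inv x := Subtype.ext (unfold_fold x.2)
  right_inv p := Subtype.ext (fold_unfold p)

lemma isCompact_cell : IsCompact cell := by
  have hcube : IsCompact (univ.pi fun _ : Fin 4 => Icc (0 : ℝ) 1) :=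
    isCompact_univ_pi fun _ => isCompact_Icc
  convert hcube.inter_right (isClosed_eq (f := fun x : Fin 4 → ℝ => max (x 0) (x 1))
    (g := fun x => max (x 2) (x 3)) (by fun_prop) (by fun_prop)) using 1
  ext x
  simp only [cell, mem_inter_iff, mem_univ_pi, mem_Icc, mem_ofPred_eq]

lemma image_fold_cell : fold '' cell = pyramid :=
  Subset.antisymm (image_subset_iff.2 fun _ => fold_mem_pyramid)
    fun p hp => ⟨unfold p, unfold_mem_cell hp, fold_unfold p⟩

lemma isCompact_pyramid : IsCompact pyramid :=
  image_fold_cell ▸ isCompact_cell.image continuous_fold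

lemma convex_pyramid : Convex ℝ pyramid := by
  let π (i : Fin 3) : EuclideanSpace ℝ (Fin 3) →ₗ[ℝ] ℝ := (EuclideanSpace.proj i).toLinearMap
  exact (convex_setOf_abs_le (π 1) (π 0)).inter <| (convex_setOf_abs_le (π 2) (π 0)).inter <|
    convex_halfSpace_le (π 0).isLinear 1

lemma interior_pyramid_nonempty : (interior pyramid).Nonempty := by
  have hopen : IsOpen {p : EuclideanSpace ℝ (Fin 3) | |p 1| < p 0 ∧ |p 2| < p 0 ∧ p 0 < 1} :=
    (isOpen_lt (by fun_prop) (by fun_prop)).and <|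
      (isOpen_lt (by fun_prop) (by fun_prop)).and (isOpen_lt (by fun_prop) (by fun_prop))
  refine ⟨!₂[1 / 2, 0, 0], interior_maximal ?_ hopen ?_⟩
  · exact fun p ⟨h1, h2, h0⟩ => ⟨h1.le, h2.le, h0.le⟩
  · simp [inv_lt_one_of_one_lt₀]

end CoherentCell

open CoherentCell in
/-- the subset `P = {x ∈ [0,1]^4 | max (x 0) (x 1) = max (x 2) (x 3)}` of
`Fin 4 → ℝ` is homeomorphic to the closed unit ball in 3-dimensional Euclidean space. -/
theorem stmt17 :
    Nonempty
      (({x : Fin 4 → ℝ | (∀ i, 0 ≤ x i ∧ x i ≤ 1) ∧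
          max (x 0) (x 1) = max (x 2) (x 3)} : Set (Fin 4 → ℝ)) ≃ₜ
        (Metric.closedBall (0 : EuclideanSpace ℝ (Fin 3)) 1)) :=
  (convex_pyramid.nonempty_homeomorph_closedBall interior_pyramid_nonempty
    isCompact_pyramid).map cellHomeomorphPyramid.trans
end
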